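/- arXiv:1705.02464 — 6 statements merged into one kernel-verified Lean document; each statement's English description precedes it below -/
import Mathlib

section
/- Let W and T be real n×n matrices with W symmetric positive definite and T symmetric positive semidefinite, and let μ_min and μ_max be the smallest and largest eigenvalues of S = W^{-1/2} T W^{-1/2}. Assume μ_min < 1 < μ_max. If the positive parameters α and β satisfy (1-μ_min)/(1+μ_min) < α < (μ_max+1)/(μ_max-1) and (μ_max-1)/(μ_max+1) < β < (1+μ_min)/(1-μ_min), then the spectral radius of the TTSCSP iteration matrix satisfies ρ(G_{α,β}) < 1. -/
/-!
Let `Q = W^{1/2}` and diagonalize `S = U diag(μ) Uᵀ`. Then `M = Q U` diagonalizes `W` and `T`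
simultaneously by congruence, `W = M Mᵀ` and `T = M diag(μ) Mᵀ`, so each of the four factors of
`G_{α,β}` is `M diag(·) Mᵀ`, and `G_{α,β} = M⁻ᵀ diag(g(μᵢ)) Mᵀ` with
`g(μ) = (μ - β)(1 - αμ) / ((1 + βμ)(α + μ))`. On `[μmin, μmax]` the bounds on `α` and `β` give
`|μ - β| < 1 + βμ` and `|1 - αμ| < α + μ`, hence `|g(μᵢ)| < 1`.
-/

open Matrix

section
open scoped ComplexOrder

/-- The positive semidefinite square root of a positive semidefinite matrix
(Mathlib's former `Matrix.PosSemidef.sqrt`, restored with its old definition). -/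
noncomputable def Matrix.PosSemidef.sqrt {n 𝕜 : Type*} [Fintype n] [DecidableEq n] [RCLike 𝕜]
    {A : Matrix n n 𝕜} (hA : A.PosSemidef) : Matrix n n 𝕜 :=
  hA.1.eigenvectorUnitary.1 * diagonal ((↑) ∘ (√·) ∘ hA.1.eigenvalues) *
  (star hA.1.eigenvectorUnitary : Matrix n n 𝕜)

end

section
open scoped ComplexOrder

variable {n 𝕜 : Type*} [Fintype n] [DecidableEq n] [RCLike 𝕜] {A : Matrix n n 𝕜}

lemma Matrix.PosSemidef.sqrt_eq_cfc (hA : A.PosSemidef) : hA.sqrt = cfc Real.sqrt A := by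
  rw [hA.1.cfc_eq, IsHermitian.cfc, Unitary.conjStarAlgAut_apply, PosSemidef.sqrt]

lemma Matrix.PosSemidef.sqrt_mul_self (hA : A.PosSemidef) : hA.sqrt * hA.sqrt = A := by
  have hspec : ∀ x ∈ spectrum ℝ A, √x * √x = x := by
    rw [hA.1.spectrum_real_eq_range_eigenvalues]
    rintro - ⟨i, rfl⟩
    exact Real.mul_self_sqrt (hA.eigenvalues_nonneg i)
  rw [hA.sqrt_eq_cfc, ← cfc_mul Real.sqrt Real.sqrt A, cfc_congr hspec]
  exact cfc_id' ℝ A hA.1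

lemma Matrix.PosSemidef.isHermitian_sqrt (hA : A.PosSemidef) : hA.sqrt.IsHermitian := by
  rw [hA.sqrt_eq_cfc]
  exact cfc_predicate _ _

end

noncomputable def ttscspFactor (α β μ : ℝ) : ℝ :=
  (1 + β * μ)⁻¹ * (μ - β) * (α + μ)⁻¹ * (1 - α * μ)

lemma abs_ttscspFactor_lt_one {α β μ μmin μmax : ℝ} (hα : 0 < α) (hβ : 0 < β)
    (hμmin0 : 0 ≤ μmin) (hμ : μ ∈ Set.Icc μmin μmax) (hmin1 : μmin < 1) (hmax1 : 1 < μmax)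
    (hα1 : (1 - μmin) / (1 + μmin) < α) (hα2 : α < (μmax + 1) / (μmax - 1))
    (hβ1 : (μmax - 1) / (μmax + 1) < β) (hβ2 : β < (1 + μmin) / (1 - μmin)) :
    |ttscspFactor α β μ| < 1 := by
  obtain ⟨h1, h2⟩ := hμ
  rw [div_lt_iff₀ (by linarith)] at hα1 hβ1
  rw [lt_div_iff₀ (by linarith)] at hα2 hβ2
  have hμ0 : 0 ≤ μ := hμmin0.trans h1
  have hβμ : |μ - β| < 1 + β * μ := by
    refine abs_lt.2 ⟨?_, ?_⟩
    · nlinarith [mul_nonneg (sub_nonneg.2 h1) hβ.le]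
    · rcases le_or_gt β 1 with h | h
      · nlinarith [mul_nonneg (sub_nonneg.2 h2) (sub_nonneg.2 h)]
      · nlinarith [mul_nonneg hμ0 (sub_pos.2 h).le]
  have hαμ : |1 - α * μ| < α + μ := by
    refine abs_lt.2 ⟨?_, ?_⟩
    · rcases le_or_gt α 1 with h | h
      · nlinarith [mul_nonneg hμ0 (sub_nonneg.2 h)]
      · nlinarith [mul_nonneg (sub_nonneg.2 h2) (sub_pos.2 h).le]
    · nlinarith [mul_nonneg (sub_nonneg.2 h1) hα.le]
  have hden : 0 < (1 + β * μ) * (α + μ) := by positivity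
  have hfactor : ttscspFactor α β μ = (μ - β) * (1 - α * μ) / ((1 + β * μ) * (α + μ)) := by
    rw [ttscspFactor]
    field_simp
  rw [hfactor, abs_div, abs_mul, abs_of_pos hden, div_lt_one hden]
  exact mul_lt_mul'' hβμ hαμ (abs_nonneg _) (abs_nonneg _)

section

variable {n : Type*} [Fintype n] [DecidableEq n]

lemma exists_isUnit_eq_mul_transpose_and_eq_mul_diagonal {W T S : Matrix n n ℝ} (hW : W.PosDef)
    (hSdef : S = (hW.posSemidef.sqrt)⁻¹ * T * (hW.posSemidef.sqrt)⁻¹) (hS : S.IsHermitian) :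
    ∃ M : Matrix n n ℝ, IsUnit M.det ∧ W = M * Mᵀ ∧ T = M * diagonal hS.eigenvalues * Mᵀ := by
  set Q := hW.posSemidef.sqrt
  set U : Matrix n n ℝ := ↑hS.eigenvectorUnitary
  have hQQ : Q * Q = W := hW.posSemidef.sqrt_mul_self
  have hQT : Qᵀ = Q := hW.posSemidef.isHermitian_sqrt
  have hQ : IsUnit Q.det := by
    have hWdet : IsUnit W.det := isUnit_iff_ne_zero.2 hW.det_pos.ne'
    rw [← hQQ, det_mul, IsUnit.mul_iff] at hWdet
    exact hWdet.1
  have hstar : star U = Uᵀ := by rw [star_eq_conjTranspose, conjTranspose_eq_transpose_of_trivial]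
  have hUU : U * Uᵀ = 1 := hstar ▸ mem_unitaryGroup_iff.mp hS.eigenvectorUnitary.2
  have hSU : S = U * diagonal hS.eigenvalues * Uᵀ := by
    have h := hS.spectral_theorem
    rwa [Unitary.conjStarAlgAut_apply, RCLike.ofReal_real_eq_id, Function.id_comp, hstar] at h
  refine ⟨Q * U, ?_, ?_, ?_⟩
  · rw [det_mul]
    exact hQ.mul (UnitaryGroup.det_isUnit hS.eigenvectorUnitary)
  · rw [transpose_mul, hQT, Matrix.mul_assoc, ← Matrix.mul_assoc U, hUU, Matrix.one_mul, hQQ]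
  · have hT : T = Q * (U * diagonal hS.eigenvalues * Uᵀ) * Q := by
      rw [← hSU, hSdef]
      simp only [Matrix.mul_assoc, nonsing_inv_mul _ hQ, Matrix.mul_one,
        mul_nonsing_inv_cancel_left _ _ hQ]
    rw [hT, transpose_mul, hQT]
    simp only [Matrix.mul_assoc]

lemma smul_add_smul_congr_diagonal {R : Type*} [CommRing R] (M : Matrix n n R) (d : n → R)
    (a b : R) :
    a • (M * Mᵀ) + b • (M * diagonal d * Mᵀ) = M * diagonal (fun i => a + b * d i) * Mᵀ := by
  have hdiag : diagonal (fun i => a + b * d i) = a • 1 + b • diagonal d := by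
    rw [← diagonal_one, ← diagonal_smul, ← diagonal_smul, diagonal_add]
    congr 1
    funext i
    simp
  rw [hdiag, Matrix.mul_add, Matrix.add_mul, Matrix.mul_smul, Matrix.smul_mul, Matrix.mul_one,
    Matrix.mul_smul, Matrix.smul_mul]

lemma inv_congr_diagonal_mul_congr_diagonal {K : Type*} [Field K] {M : Matrix n n K}
    (hM : IsUnit M.det) {d₁ : n → K} (hd₁ : ∀ i, d₁ i ≠ 0) (d₂ : n → K) :
    (M * diagonal d₁ * Mᵀ)⁻¹ * (M * diagonal d₂ * Mᵀ)
      = (Mᵀ)⁻¹ * diagonal (fun i => (d₁ i)⁻¹ * d₂ i) * Mᵀ := by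
  have hinv : (diagonal d₁)⁻¹ = diagonal fun i => (d₁ i)⁻¹ := by
    refine inv_eq_left_inv ?_
    rw [diagonal_mul_diagonal, ← diagonal_one]
    exact congrArg diagonal (funext fun i => inv_mul_cancel₀ (hd₁ i))
  rw [Matrix.mul_inv_rev, Matrix.mul_inv_rev, hinv, ← diagonal_mul_diagonal]
  simp only [Matrix.mul_assoc, nonsing_inv_mul_cancel_left _ _ hM]

lemma conj_mul_conj {R : Type*} [CommRing R] {P : Matrix n n R} (hP : IsUnit P.det)
    (A B : Matrix n n R) : (P⁻¹ * A * P) * (P⁻¹ * B * P) = P⁻¹ * (A * B) * P := by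
  simp only [Matrix.mul_assoc, mul_nonsing_inv_cancel_left _ _ hP]

lemma ttscsp_iterationMatrix_eq_conj_diagonal {W T M : Matrix n n ℝ} {d : n → ℝ}
    (hM : IsUnit M.det) (hW : W = M * Mᵀ) (hT : T = M * diagonal d * Mᵀ) (hd : ∀ i, 0 ≤ d i)
    {α β : ℝ} (hα : 0 < α) (hβ : 0 < β) :
    (W + β • T)⁻¹ * (T - β • W) * (α • W + T)⁻¹ * (W - α • T)
      = (Mᵀ)⁻¹ * diagonal (fun i => ttscspFactor α β (d i)) * Mᵀ := by
  have pencil (a b : ℝ) : a • W + b • T = M * diagonal (fun i => a + b * d i) * Mᵀ := by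
    rw [hW, hT, smul_add_smul_congr_diagonal]
  have hMT : IsUnit Mᵀ.det := by rwa [det_transpose]
  rw [show W + β • T = (1 : ℝ) • W + β • T by rw [one_smul],
    show T - β • W = (-β) • W + (1 : ℝ) • T by module,
    show α • W + T = α • W + (1 : ℝ) • T by rw [one_smul],
    show W - α • T = (1 : ℝ) • W + (-α) • T by module,
    pencil, pencil, pencil, pencil, Matrix.mul_assoc (_ * _),
    inv_congr_diagonal_mul_congr_diagonal hM (fun i => by positivity [hd i]),
    inv_congr_diagonal_mul_congr_diagonal hM (fun i => by positivity [hd i]),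
    conj_mul_conj hMT, diagonal_mul_diagonal]
  refine congrArg (fun D => (Mᵀ)⁻¹ * diagonal D * Mᵀ) (funext fun i => ?_)
  simp only [ttscspFactor, one_mul]
  ring

lemma spectralRadius_map_conj_diagonal_lt_one {P : Matrix n n ℝ} (hP : IsUnit P.det)
    {d : n → ℝ} (hd : ∀ i, |d i| < 1) :
    spectralRadius ℂ ((P⁻¹ * diagonal d * P).map Complex.ofReal) < 1 := by
  set u : (Matrix n n ℂ)ˣ := Units.map Complex.ofRealHom.mapMatrix.toMonoidHom
    ((isUnit_iff_isUnit_det P).2 hP).unit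
  have hconj : (P⁻¹ * diagonal d * P).map Complex.ofReal
      = (↑u⁻¹ : Matrix n n ℂ) * diagonal (fun i => (d i : ℂ)) * (↑u : Matrix n n ℂ) := by
    have hmap (X Y : Matrix n n ℝ) :
        (X * Y).map Complex.ofReal = X.map Complex.ofReal * Y.map Complex.ofReal :=
      Matrix.map_mul (f := Complex.ofRealHom)
    rw [Units.coe_map_inv, Units.coe_map, coe_units_inv, IsUnit.unit_spec, hmap, hmap,
      diagonal_map Complex.ofReal_zero]
    rfl
  rw [hconj, spectralRadius, spectrum.units_conjugate', spectrum_diagonal, iSup_range,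
    ← Finset.sup_univ_eq_iSup, Finset.sup_lt_iff zero_lt_one]
  intro i _
  simpa [Complex.nnnorm_real, ← NNReal.coe_lt_coe] using hd i

end

theorem ttscsp_convergence_general
    {n : ℕ}
    (W T : Matrix (Fin n) (Fin n) ℝ)
    (hW : W.PosDef) (hT : T.PosSemidef)
    (S : Matrix (Fin n) (Fin n) ℝ)
    (hSdef : S = (hW.posSemidef.sqrt)⁻¹ * T * (hW.posSemidef.sqrt)⁻¹)
    (hS : S.IsHermitian)
    (μmin μmax : ℝ)
    (hμmin : μmin = ⨅ i, hS.eigenvalues i)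
    (hμmax : μmax = ⨆ i, hS.eigenvalues i)
    (hmin1 : μmin < 1) (hmax1 : 1 < μmax)
    (α β : ℝ) (hα : 0 < α) (hβ : 0 < β)
    (hα1 : (1 - μmin) / (1 + μmin) < α) (hα2 : α < (μmax + 1) / (μmax - 1))
    (hβ1 : (μmax - 1) / (μmax + 1) < β) (hβ2 : β < (1 + μmin) / (1 - μmin)) :
    spectralRadius ℂ
      (((W + β • T)⁻¹ * (T - β • W) * (α • W + T)⁻¹ * (W - α • T)).map Complex.ofReal) < 1 := by
  obtain ⟨M, hM, hWM, hTM⟩ := exists_isUnit_eq_mul_transpose_and_eq_mul_diagonal hW hSdef hS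
  have hSpsd : S.PosSemidef := by
    have h := hT.mul_mul_conjTranspose_same (hW.posSemidef.sqrt)⁻¹
    rwa [hW.posSemidef.isHermitian_sqrt.inv.eq, ← hSdef] at h
  have hμ0 : ∀ i, 0 ≤ hS.eigenvalues i := hSpsd.eigenvalues_nonneg
  have hμ : ∀ i, hS.eigenvalues i ∈ Set.Icc μmin μmax := fun i =>
    ⟨hμmin ▸ ciInf_le (Set.finite_range _).bddBelow i,
      hμmax ▸ le_ciSup (Set.finite_range _).bddAbove i⟩
  have hμmin0 : 0 ≤ μmin := hμmin ▸ Real.iInf_nonneg hμ0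
  rw [ttscsp_iterationMatrix_eq_conj_diagonal hM hWM hTM hμ0 hα hβ]
  exact spectralRadius_map_conj_diagonal_lt_one (by rwa [det_transpose]) fun i =>
    abs_ttscspFactor_lt_one hα hβ hμmin0 (hμ i) hmin1 hmax1 hα1 hα2 hβ1 hβ2

/-- **Theorem 1 (convergence of TTSCSP).**
If `W` is symmetric positive definite, `T` symmetric positive semidefinite,
`μmin < 1 < μmax` are the extreme eigenvalues of `S = W^{-1/2} T W^{-1/2}`, and the
positive parameters `α, β` satisfy
`(1-μmin)/(1+μmin) < α < (μmax+1)/(μmax-1)` and `(μmax-1)/(μmax+1) < β < (1+μmin)/(1-μmin)`,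
then the spectral radius of the TTSCSP iteration matrix
`G = (W+βT)⁻¹ (T-βW) (αW+T)⁻¹ (W-αT)` is less than one. -/
theorem ttscsp_convergence
    {n : ℕ} (hn : 0 < n)
    (W T : Matrix (Fin n) (Fin n) ℝ)
    (hW : W.PosDef) (hT : T.PosSemidef)
    (S : Matrix (Fin n) (Fin n) ℝ)
    (hSdef : S = (hW.posSemidef.sqrt)⁻¹ * T * (hW.posSemidef.sqrt)⁻¹)
    (hS : S.IsHermitian)
    (μmin μmax : ℝ)
    (hμmin : μmin = ⨅ i, hS.eigenvalues i)
    (hμmax : μmax = ⨆ i, hS.eigenvalues i)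
    (hmin1 : μmin < 1) (hmax1 : 1 < μmax)
    (α β : ℝ) (hα : 0 < α) (hβ : 0 < β)
    (hα1 : (1 - μmin) / (1 + μmin) < α) (hα2 : α < (μmax + 1) / (μmax - 1))
    (hβ1 : (μmax - 1) / (μmax + 1) < β) (hβ2 : β < (1 + μmin) / (1 - μmin)) :
    spectralRadius ℂ
      (((W + β • T)⁻¹ * (T - β • W) * (α • W + T)⁻¹ * (W - α • T)).map Complex.ofReal) < 1 :=
  ttscsp_convergence_general W T hW hT S hSdef hS μmin μmax hμmin hμmax hmin1 hmax1 α β hα hβ hα1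
    hα2 hβ1 hβ2
end

section
/- Let W and T be real n×n matrices with W symmetric positive definite and T symmetric positive semidefinite, let μ_min and μ_max be the smallest and largest eigenvalues of S = W^{-1/2} T W^{-1/2}, and assume μ_max > 0. Set η = μ_min + μ_max, γ = 1 - μ_min·μ_max, α* = (γ + √(γ² + η²))/η and β* = 1/α*. Define σ(α,β) = (max over eigenvalues μ of S of |(μ-β)/(1+βμ)|) · (max over eigenvalues μ of S of |(1-αμ)/(α+μ)|). Then for all α > 0 and β > 0 one has σ(α*, β*) ≤ σ(α, β); that is, (α*, β*) minimizes σ over positive parameters. -/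
/-!
With `φ_t(μ) = (μ - t)/(1 + tμ)`, both factors of `σ` are suprema of `|φ_t|` over the spectrum
of `S`: the first for `t = β`, the second for `t = 1/α`, since `(1 - αμ)/(α + μ) = -φ_{1/α}(μ)`.
For `t > 0` the map `φ_t` is increasing in `μ ≥ 0` and decreasing in `t`, so on the spectrum
`|φ_t|` is largest at `μmin` or `μmax`, and `max(|φ_t(μmin)|, |φ_t(μmax)|)` is minimized by the
`t` at which `φ_t(μmax) = -φ_t(μmin)`. This equioscillation condition is the quadratic
`η α² - 2γα - η = 0` in `α = 1/t`, whose positive root is `α*`. Hence `β* = 1/α*` minimizes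
each factor separately.
-/

open Matrix

/-- The square root of a positive semidefinite matrix, as `Matrix.PosSemidef.sqrt` was defined
in the older Mathlib (removed since). -/
noncomputable def Matrix.PosSemidef.oldSqrt {n : Type*} [Fintype n] [DecidableEq n]
    {A : Matrix n n ℝ} (hA : A.PosSemidef) : Matrix n n ℝ :=
  (hA.1.eigenvectorUnitary : Matrix n n ℝ) * diagonal ((↑) ∘ (√·) ∘ hA.1.eigenvalues) *
    (star hA.1.eigenvectorUnitary : Matrix n n ℝ)

theorem Matrix.PosSemidef.oldSqrt_isHermitian {n : Type*} [Fintype n] [DecidableEq n]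
    {A : Matrix n n ℝ} (hA : A.PosSemidef) : hA.oldSqrt.IsHermitian := by
  unfold Matrix.PosSemidef.oldSqrt
  rw [star_eq_conjTranspose]
  exact isHermitian_mul_mul_conjTranspose _ (isHermitian_diagonal _)

theorem Matrix.PosSemidef.inv_oldSqrt_mul_mul_inv_oldSqrt {n : Type*} [Fintype n] [DecidableEq n]
    {A T : Matrix n n ℝ} (hA : A.PosSemidef) (hT : T.PosSemidef) :
    (hA.oldSqrt⁻¹ * T * hA.oldSqrt⁻¹).PosSemidef := by
  have h := hT.conjTranspose_mul_mul_same hA.oldSqrt⁻¹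
  rwa [hA.oldSqrt_isHermitian.inv.eq] at h

noncomputable def rationalFactor (t μ : ℝ) : ℝ := (μ - t) / (1 + t * μ)

theorem rationalFactor_monotoneOn {t : ℝ} (ht : 0 ≤ t) :
    MonotoneOn (rationalFactor t) (Set.Ici 0) := by
  intro μ hμ ν hν hμν
  rw [Set.mem_Ici] at hμ hν
  unfold rationalFactor
  rw [div_le_div_iff₀ (by positivity) (by positivity)]
  nlinarith [mul_nonneg (sub_nonneg.2 hμν) (sq_nonneg t)]

theorem rationalFactor_antitoneOn {μ : ℝ} (hμ : 0 ≤ μ) :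
    AntitoneOn (fun t ↦ rationalFactor t μ) (Set.Ici 0) := by
  intro s hs t ht hst
  rw [Set.mem_Ici] at hs ht
  simp only [rationalFactor]
  rw [div_le_div_iff₀ (by positivity) (by positivity)]
  nlinarith [mul_nonneg (sub_nonneg.2 hst) (sq_nonneg μ)]

theorem rationalFactor_inv {a : ℝ} (ha : a ≠ 0) (μ : ℝ) :
    rationalFactor a⁻¹ μ = -((1 - a * μ) / (a + μ)) := by
  rw [rationalFactor, ← mul_div_mul_left _ _ ha, ← neg_div]
  congr 1 <;> field_simp; ring

theorem max_abs_rationalFactor_le_of_equioscillation {m M β t : ℝ} (hm : 0 ≤ m) (hmM : m ≤ M)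
    (hβ : 0 < β) (ht : 0 < t) (hequi : rationalFactor β M = -rationalFactor β m) :
    max |rationalFactor β m| |rationalFactor β M| ≤
      max |rationalFactor t m| |rationalFactor t M| := by
  have hM : (0 : ℝ) ≤ M := hm.trans hmM
  have hβmM := rationalFactor_monotoneOn hβ.le hm hM hmM
  rw [hequi, abs_neg, max_self, abs_of_nonpos (by linarith)]
  rcases le_total t β with htβ | hβt
  · have := rationalFactor_antitoneOn hM ht.le hβ.le htβ
    exact le_max_of_le_right (le_abs.2 (Or.inl (by linarith)))
  · have := rationalFactor_antitoneOn hm hβ.le ht.le hβt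
    exact le_max_of_le_left (le_abs.2 (Or.inr (by linarith)))

theorem iSup_abs_rationalFactor_eq_max {ι : Type*} [Finite ι] [Nonempty ι] {f : ι → ℝ}
    (hf : ∀ i, 0 ≤ f i) {t : ℝ} (ht : 0 ≤ t) :
    ⨆ i, |rationalFactor t (f i)| =
      max |rationalFactor t (⨅ i, f i)| |rationalFactor t (⨆ i, f i)| := by
  obtain ⟨imin, himin⟩ := exists_eq_ciInf_of_finite (f := f)
  obtain ⟨imax, himax⟩ := exists_eq_ciSup_of_finite (f := f)
  have hbdd : BddAbove (Set.range fun i ↦ |rationalFactor t (f i)|) := Finite.bddAbove_range _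
  refine le_antisymm (ciSup_le fun i ↦ abs_le_max_abs_abs ?_ ?_) ?_
  · exact rationalFactor_monotoneOn ht (himin ▸ hf imin) (hf i)
      (ciInf_le (Finite.bddBelow_range f) i)
  · exact rationalFactor_monotoneOn ht (hf i) (himax ▸ hf imax)
      (le_ciSup (Finite.bddAbove_range f) i)
  · rw [← himin, ← himax]
    exact max_le (le_ciSup hbdd imin) (le_ciSup hbdd imax)

/-- `α* = (γ + √(γ² + η²))/η` with `η = m + M` and `γ = 1 - mM`. -/
noncomputable def optimalAlpha (m M : ℝ) : ℝ :=
  (1 - m * M + √((1 - m * M) ^ 2 + (m + M) ^ 2)) / (m + M)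

section optimalAlpha

variable {m M : ℝ} (hη : 0 < m + M)
include hη

theorem optimalAlpha_pos : 0 < optimalAlpha m M := by
  have hr := Real.sq_sqrt (by positivity : 0 ≤ (1 - m * M) ^ 2 + (m + M) ^ 2)
  have := Real.sqrt_nonneg ((1 - m * M) ^ 2 + (m + M) ^ 2)
  exact div_pos (by nlinarith) hη

theorem optimalAlpha_quadratic :
    (m + M) * optimalAlpha m M ^ 2 - 2 * (1 - m * M) * optimalAlpha m M - (m + M) = 0 := by
  have hr := Real.sq_sqrt (by positivity : 0 ≤ (1 - m * M) ^ 2 + (m + M) ^ 2)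
  have hα : (m + M) * optimalAlpha m M - (1 - m * M) = √((1 - m * M) ^ 2 + (m + M) ^ 2) := by
    rw [optimalAlpha, mul_div_cancel₀ _ hη.ne']
    ring
  have h : (m + M) * ((m + M) * optimalAlpha m M ^ 2 - 2 * (1 - m * M) * optimalAlpha m M
      - (m + M)) = 0 := by
    linear_combination (congrArg (· ^ 2) hα).trans hr
  exact (mul_eq_zero.1 h).resolve_left hη.ne'

theorem rationalFactor_optimalAlpha_inv (hm : 0 ≤ m) (hM : 0 ≤ M) :
    rationalFactor (optimalAlpha m M)⁻¹ M = -rationalFactor (optimalAlpha m M)⁻¹ m := by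
  have hα := optimalAlpha_pos hη
  rw [rationalFactor_inv hα.ne', rationalFactor_inv hα.ne', neg_neg, neg_eq_iff_add_eq_zero,
    div_add_div _ _ (by positivity) (by positivity), div_eq_zero_iff]
  left
  linear_combination -optimalAlpha_quadratic hη

end optimalAlpha

theorem iSup_abs_rationalFactor_optimalAlpha_inv_le {ι : Type*} [Finite ι] {f : ι → ℝ}
    (hf : ∀ i, 0 ≤ f i) (hM : 0 < ⨆ i, f i) {t : ℝ} (ht : 0 < t) :
    ⨆ i, |rationalFactor (optimalAlpha (⨅ i, f i) (⨆ i, f i))⁻¹ (f i)| ≤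
      ⨆ i, |rationalFactor t (f i)| := by
  have : Nonempty ι := by
    by_contra hι
    rw [not_nonempty_iff] at hι
    rw [Real.iSup_of_isEmpty] at hM
    exact hM.false
  have hm : 0 ≤ ⨅ i, f i := Real.iInf_nonneg hf
  have hmM : ⨅ i, f i ≤ ⨆ i, f i :=
    ciInf_le_ciSup (Finite.bddBelow_range f) (Finite.bddAbove_range f)
  have hα := optimalAlpha_pos (add_pos_of_nonneg_of_pos hm hM)
  rw [iSup_abs_rationalFactor_eq_max hf (inv_pos.2 hα).le, iSup_abs_rationalFactor_eq_max hf ht.le]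
  exact max_abs_rationalFactor_le_of_equioscillation hm hmM (inv_pos.2 hα) ht
    (rationalFactor_optimalAlpha_inv (add_pos_of_nonneg_of_pos hm hM) hm hM.le)

theorem ttscsp_optimal_parameters_general
    {n : ℕ}
    (W T : Matrix (Fin n) (Fin n) ℝ)
    (hW : W.PosDef) (hT : T.PosSemidef)
    (S : Matrix (Fin n) (Fin n) ℝ)
    (hSdef : S = (Matrix.PosSemidef.oldSqrt hW.posSemidef)⁻¹ * T * (Matrix.PosSemidef.oldSqrt hW.posSemidef)⁻¹)
    (hS : S.IsHermitian)
    (μmin μmax : ℝ)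
    (hμmin : μmin = ⨅ i, hS.eigenvalues i)
    (hμmax : μmax = ⨆ i, hS.eigenvalues i)
    (hmaxpos : 0 < μmax)
    (η γ αstar βstar : ℝ)
    (hη : η = μmin + μmax) (hγ : γ = 1 - μmin * μmax)
    (hαstar : αstar = (γ + Real.sqrt (γ ^ 2 + η ^ 2)) / η)
    (hβstar : βstar = 1 / αstar)
    (σ : ℝ → ℝ → ℝ)
    (hσ : ∀ a b : ℝ, σ a b =
      (⨆ i, |(hS.eigenvalues i - b) / (1 + b * hS.eigenvalues i)|) *
      (⨆ i, |(1 - a * hS.eigenvalues i) / (a + hS.eigenvalues i)|)) :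
    ∀ a b : ℝ, 0 < a → 0 < b → σ αstar βstar ≤ σ a b := by
  intro a b ha hb
  have hμ : ∀ i, 0 ≤ hS.eigenvalues i :=
    (hSdef ▸ hW.posSemidef.inv_oldSqrt_mul_mul_inv_oldSqrt hT).eigenvalues_nonneg
  have hopt : ∀ t, 0 < t → ⨆ i, |rationalFactor αstar⁻¹ (hS.eigenvalues i)| ≤
      ⨆ i, |rationalFactor t (hS.eigenvalues i)| := by
    subst hαstar hη hγ hμmin hμmax
    exact fun t ht ↦ iSup_abs_rationalFactor_optimalAlpha_inv_le hμ hmaxpos ht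
  have hflip : ∀ a ≠ 0, ⨆ i, |(1 - a * hS.eigenvalues i) / (a + hS.eigenvalues i)| =
      ⨆ i, |rationalFactor a⁻¹ (hS.eigenvalues i)| := fun a ha ↦
    iSup_congr fun i ↦ by rw [rationalFactor_inv ha, abs_neg]
  have hαpos : 0 < αstar := by
    subst hαstar hη hγ hμmin
    exact optimalAlpha_pos (add_pos_of_nonneg_of_pos (Real.iInf_nonneg hμ) hmaxpos)
  rw [hσ, hσ, hβstar, one_div, hflip a ha.ne', hflip αstar hαpos.ne']
  exact mul_le_mul (hopt b hb) (hopt a⁻¹ (inv_pos.2 ha)) (Real.iSup_nonneg fun _ ↦ abs_nonneg _)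
    (Real.iSup_nonneg fun _ ↦ abs_nonneg _)

/-- **Theorem 2 (optimal parameters).** With `η = μmin + μmax`, `γ = 1 - μmin·μmax`,
`α* = (γ + √(γ² + η²))/η` and `β* = 1/α*`, the pair `(α*, β*)` minimizes the bound
`σ(α,β) = (max_μ |(μ-β)/(1+βμ)|) · (max_μ |(1-αμ)/(α+μ)|)` over positive parameters,
where `μ` ranges over the eigenvalues of `S = W^{-1/2} T W^{-1/2}`. -/
theorem ttscsp_optimal_parameters
    {n : ℕ} (hn : 0 < n)
    (W T : Matrix (Fin n) (Fin n) ℝ)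
    (hW : W.PosDef) (hT : T.PosSemidef)
    (S : Matrix (Fin n) (Fin n) ℝ)
    (hSdef : S = (Matrix.PosSemidef.oldSqrt hW.posSemidef)⁻¹ * T * (Matrix.PosSemidef.oldSqrt hW.posSemidef)⁻¹)
    (hS : S.IsHermitian)
    (μmin μmax : ℝ)
    (hμmin : μmin = ⨅ i, hS.eigenvalues i)
    (hμmax : μmax = ⨆ i, hS.eigenvalues i)
    (hmaxpos : 0 < μmax)
    (η γ αstar βstar : ℝ)
    (hη : η = μmin + μmax) (hγ : γ = 1 - μmin * μmax)
    (hαstar : αstar = (γ + Real.sqrt (γ ^ 2 + η ^ 2)) / η)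
    (hβstar : βstar = 1 / αstar)
    (σ : ℝ → ℝ → ℝ)
    (hσ : ∀ a b : ℝ, σ a b =
      (⨆ i, |(hS.eigenvalues i - b) / (1 + b * hS.eigenvalues i)|) *
      (⨆ i, |(1 - a * hS.eigenvalues i) / (a + hS.eigenvalues i)|)) :
    ∀ a b : ℝ, 0 < a → 0 < b → σ αstar βstar ≤ σ a b :=
  ttscsp_optimal_parameters_general W T hW hT S hSdef hS μmin μmax hμmin hμmax hmaxpos η γ αstar
    βstar hη hγ hαstar hβstar σ hσ
end

section
/- Let a and b be real numbers with 0 ≤ a ≤ b and a + b > 0, and set η = a + b, γ = 1 - ab, α* = (γ + √(γ² + η²))/η and β* = 1/α*. Then β* = (√(γ² + η²) - γ)/η, β* > 0, β* is a root of the quadratic η·x² + 2γ·x - η = 0, it satisfies the balancing equation (β* - a)/(1 + β*·a) = (b - β*)/(1 + β*·b), and β* is the unique positive real number with this property. -/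
/-- **Properties of the optimal parameter `β*`.** For `0 ≤ a ≤ b` with `a + b > 0`,
setting `η = a + b`, `γ = 1 - ab`, `α* = (γ + √(γ² + η²))/η` and `β* = 1/α*`, one has
`β* = (√(γ² + η²) - γ)/η`, `β*` is positive, solves the quadratic `η·x² + 2γ·x - η = 0`,
satisfies the balancing equation `(β* - a)/(1 + β*·a) = (b - β*)/(1 + β*·b)`, and is the
unique positive real number satisfying this balancing equation. -/
theorem optimal_beta_properties
    (a b₀ : ℝ) (ha : 0 ≤ a) (hab : a ≤ b₀) (hsum : 0 < a + b₀)
    (η γ αstar βstar : ℝ)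
    (hη : η = a + b₀) (hγ : γ = 1 - a * b₀)
    (hαstar : αstar = (γ + Real.sqrt (γ ^ 2 + η ^ 2)) / η)
    (hβstar : βstar = 1 / αstar) :
    βstar = (Real.sqrt (γ ^ 2 + η ^ 2) - γ) / η ∧
    0 < βstar ∧
    η * βstar ^ 2 + 2 * γ * βstar - η = 0 ∧
    (βstar - a) / (1 + βstar * a) = (b₀ - βstar) / (1 + βstar * b₀) ∧
    (∀ x : ℝ, 0 < x → (x - a) / (1 + x * a) = (b₀ - x) / (1 + x * b₀) → x = βstar) := by
  have hη0 : 0 < η := by rw [hη]; exact hsum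
  set s := Real.sqrt (γ ^ 2 + η ^ 2) with hs
  have hs0 : 0 ≤ s := Real.sqrt_nonneg _
  have hs2 : s ^ 2 = γ ^ 2 + η ^ 2 := Real.sq_sqrt (by positivity)
  have hsγ : -γ < s := by nlinarith
  have hsγ' : γ < s := by nlinarith
  have hγs : 0 < γ + s := by linarith
  have hb : 0 < b₀ := by linarith
  have h1 : βstar = (s - γ) / η := by
    rw [hβstar, hαstar, one_div_div, div_eq_div_iff hγs.ne' hη0.ne']
    nlinarith
  have h2 : 0 < βstar := by
    rw [h1]; exact div_pos (by linarith) hη0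
  have h3 : η * βstar ^ 2 + 2 * γ * βstar - η = 0 := by
    rw [h1]
    field_simp
    nlinarith
  have hda : 0 < 1 + βstar * a := by nlinarith
  have hdb : 0 < 1 + βstar * b₀ := by nlinarith
  have h3' : (a + b₀) * βstar ^ 2 + 2 * (1 - a * b₀) * βstar - (a + b₀) = 0 := by
    rw [← hη, ← hγ]; exact h3
  have h4 : (βstar - a) / (1 + βstar * a) = (b₀ - βstar) / (1 + βstar * b₀) := by
    rw [div_eq_div_iff hda.ne' hdb.ne']
    linear_combination h3'
  refine ⟨h1, h2, h3, h4, ?_⟩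
  intro x hx hbal
  have hxa : 0 < 1 + x * a := by nlinarith
  have hxb : 0 < 1 + x * b₀ := by nlinarith
  rw [div_eq_div_iff hxa.ne' hxb.ne'] at hbal
  have qx : η * x ^ 2 + 2 * γ * x - η = 0 := by
    rw [hη, hγ]; linear_combination hbal
  have key : (x - βstar) * (η * (x + βstar) + 2 * γ) = 0 := by
    linear_combination qx - h3
  have hcoef : βstar * (η * βstar + 2 * γ) = η := by linear_combination h3
  have hcp : 0 < η * βstar + 2 * γ := by
    by_contra h
    push_neg at h
    have := mul_nonpos_of_nonneg_of_nonpos h2.le h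
    linarith
  have hpos : 0 < η * (x + βstar) + 2 * γ := by
    have hrw : η * (x + βstar) + 2 * γ = η * x + (η * βstar + 2 * γ) := by ring
    rw [hrw]
    have := mul_pos hη0 hx
    linarith
  rcases mul_eq_zero.mp key with h | h
  · linarith
  · linarith
end

section
/- Let μ ≥ 0 and β > 0 be real numbers. If μ ≥ 1, then |μ - β|/(1 + βμ) < 1 if and only if β > (μ-1)/(μ+1). If 0 ≤ μ < 1, then |μ - β|/(1 + βμ) < 1 if and only if β < (1+μ)/(1-μ). -/
/-- **Scalar characterization for the `β`-factor.** For `μ ≥ 0` and `β > 0`: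
if `μ ≥ 1`, then `|μ - β|/(1 + βμ) < 1 ↔ β > (μ-1)/(μ+1)`;
if `0 ≤ μ < 1`, then `|μ - β|/(1 + βμ) < 1 ↔ β < (1+μ)/(1-μ)`. -/
theorem beta_factor_lt_one_iff
    (μ β : ℝ) (hμ : 0 ≤ μ) (hβ : 0 < β) :
    (1 ≤ μ → (|μ - β| / (1 + β * μ) < 1 ↔ (μ - 1) / (μ + 1) < β)) ∧
    (μ < 1 → (|μ - β| / (1 + β * μ) < 1 ↔ β < (1 + μ) / (1 - μ))) := by
  have hden : 0 < 1 + β * μ := by nlinarith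
  constructor
  · intro h1
    rw [div_lt_one hden, abs_lt, div_lt_iff₀ (by linarith : (0:ℝ) < μ + 1)]
    constructor
    · rintro ⟨h, h'⟩; nlinarith
    · intro h; constructor <;> nlinarith
  · intro h1
    rw [div_lt_one hden, abs_lt, lt_div_iff₀ (by linarith : (0:ℝ) < 1 - μ)]
    constructor
    · rintro ⟨h, h'⟩; nlinarith
    · intro h; constructor <;> nlinarith
end

section
/- Let W and T be real n×n matrices, regarded as complex matrices, let α, β be real numbers such that αW + T and W + βT are invertible, and let u, v, w, b ∈ ℂⁿ. If (αW + T)v = i(W - αT)u + (α - i)b and (W + βT)w = i(βW - T)v + (1 - βi)b, then w = G_{α,β} u + (α + β)(W + βT)^{-1}(W - iT)(αW + T)^{-1} b, where G_{α,β} = (W + βT)^{-1}(T - βW)(αW + T)^{-1}(W - αT). -/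
open Matrix

/-- **One full TTSCSP step.** If `v` and `w` satisfy the two half-step equations
`(αW + T)v = i(W - αT)u + (α - i)b` and `(W + βT)w = i(βW - T)v + (1 - βi)b`
(with `αW + T` and `W + βT` invertible), then
`w = G_{α,β} u + (α + β)(W + βT)⁻¹(W - iT)(αW + T)⁻¹ b`, where
`G_{α,β} = (W + βT)⁻¹(T - βW)(αW + T)⁻¹(W - αT)`. -/
theorem ttscsp_one_step
    {n : ℕ}
    (W T : Matrix (Fin n) (Fin n) ℝ)
    (α β : ℝ)
    (hαinv : IsUnit ((α : ℂ) • (W.map Complex.ofReal) + (T.map Complex.ofReal)))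
    (hβinv : IsUnit ((W.map Complex.ofReal) + (β : ℂ) • (T.map Complex.ofReal)))
    (u v w b : Fin n → ℂ)
    (hv : ((α : ℂ) • (W.map Complex.ofReal) + (T.map Complex.ofReal)).mulVec v =
      Complex.I • ((W.map Complex.ofReal) - (α : ℂ) • (T.map Complex.ofReal)).mulVec u +
        ((α : ℂ) - Complex.I) • b)
    (hw : ((W.map Complex.ofReal) + (β : ℂ) • (T.map Complex.ofReal)).mulVec w =
      Complex.I • ((β : ℂ) • (W.map Complex.ofReal) - (T.map Complex.ofReal)).mulVec v +
        (1 - (β : ℂ) * Complex.I) • b) :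
    w = (((W.map Complex.ofReal) + (β : ℂ) • (T.map Complex.ofReal))⁻¹ *
          ((T.map Complex.ofReal) - (β : ℂ) • (W.map Complex.ofReal)) *
          ((α : ℂ) • (W.map Complex.ofReal) + (T.map Complex.ofReal))⁻¹ *
          ((W.map Complex.ofReal) - (α : ℂ) • (T.map Complex.ofReal))).mulVec u +
        ((α : ℂ) + (β : ℂ)) •
          (((W.map Complex.ofReal) + (β : ℂ) • (T.map Complex.ofReal))⁻¹ *
            ((W.map Complex.ofReal) - Complex.I • (T.map Complex.ofReal)) *
            ((α : ℂ) • (W.map Complex.ofReal) + (T.map Complex.ofReal))⁻¹).mulVec b := by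
  set W' := W.map Complex.ofReal with hW'
  set T' := T.map Complex.ofReal with hT'
  set A := (α : ℂ) • W' + T' with hA
  set B := W' + (β : ℂ) • T' with hB
  have hAdet := (Matrix.isUnit_iff_isUnit_det _).1 hαinv
  have hBdet := (Matrix.isUnit_iff_isUnit_det _).1 hβinv
  have hAinv : A⁻¹ * A = 1 := Matrix.nonsing_inv_mul _ hAdet
  have hAinv' : A * A⁻¹ = 1 := Matrix.mul_nonsing_inv _ hAdet
  have hBinv : B⁻¹ * B = 1 := Matrix.nonsing_inv_mul _ hBdet
  set c := A⁻¹.mulVec b with hc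
  have hbc : b = A.mulVec c := by
    rw [hc, Matrix.mulVec_mulVec, hAinv', Matrix.one_mulVec]
  have hv' : v = Complex.I • (A⁻¹ * (W' - (α:ℂ) • T')).mulVec u + ((α:ℂ) - Complex.I) • c := by
    have h := congrArg (A⁻¹.mulVec) hv
    rw [Matrix.mulVec_mulVec, hAinv, Matrix.one_mulVec] at h
    rw [h, Matrix.mulVec_add, Matrix.mulVec_smul, Matrix.mulVec_smul,
      Matrix.mulVec_mulVec, hc]
  have hw' : w = (B⁻¹).mulVec (Complex.I • ((β:ℂ) • W' - T').mulVec v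
      + (1 - (β:ℂ)*Complex.I) • b) := by
    have h := congrArg (B⁻¹.mulVec) hw
    rwa [Matrix.mulVec_mulVec, hBinv, Matrix.one_mulVec] at h
  have hrhs : (B⁻¹ * (W' - Complex.I • T') * A⁻¹) *ᵥ b
      = (B⁻¹ * (W' - Complex.I • T')) *ᵥ c := by
    rw [← Matrix.mulVec_mulVec, ← hc]
  rw [hw', hv', hrhs, hbc, hA]
  simp only [Matrix.mul_sub, Matrix.sub_mul, Matrix.mul_add, Matrix.add_mul,
    Matrix.smul_mul, Matrix.mul_smul, Matrix.mulVec_add, Matrix.mulVec_sub,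
    Matrix.add_mulVec, Matrix.sub_mulVec, Matrix.mulVec_smul,
    Matrix.smul_mulVec, ← Matrix.mulVec_mulVec, smul_smul, mul_assoc]
  match_scalars <;> ring_nf <;> simp [Complex.I_sq] <;> ring_nf
end

section
/- Let W and T be real n×n matrices with W symmetric positive definite and T symmetric positive semidefinite, and let α, β > 0. With M = (1/(α+β))·(αW + T)(W - iT)^{-1}(W + βT) and N = (1/(α+β))·(T - βW)(W - iT)^{-1}(W - αT) (the matrix W - iT being invertible), one has M - N = W + iT; that is, (M, N) is a splitting of the coefficient matrix A = W + iT. -/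
/-!
Put `S = W - iT`, so that `W = S + iT`. Each of the four outer factors of `M` and `N` is then a
linear combination of `S` and `T`, and the inner `S⁻¹` cancels every `S` it meets, so
`(α+β)M` and `(α+β)N` are combinations of `S`, `T` and `T S⁻¹ T`. The coefficients of `T S⁻¹ T`
agree because `(1 + iα)(β + i) = (1 - iβ)(i - α)`, and what remains is `(α+β)(S + 2iT)`.

`S` is invertible: if `(W - iT)v = 0` then `v* W v = i v* T v`, whose left side has positive
real part while the right side, `T` being Hermitian, is purely imaginary.
-/

open Matrix
open scoped ComplexOrder

namespace Matrix

variable {n : Type*} [Fintype n]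

open scoped MatrixOrder in
theorem PosSemidef.map_ofReal {𝕜 : Type*} [RCLike 𝕜] {A : Matrix n n ℝ} (hA : A.PosSemidef) :
    (A.map (RCLike.ofReal : ℝ → 𝕜)).PosSemidef := by
  classical
  obtain ⟨B, rfl⟩ := CStarAlgebra.nonneg_iff_eq_star_mul_self.mp hA.nonneg
  rw [star_eq_conjTranspose, Matrix.map_mul, conjTranspose_map _ fun x => by simp]
  exact posSemidef_conjTranspose_mul_self _

theorem PosDef.map_ofReal {𝕜 : Type*} [RCLike 𝕜] {A : Matrix n n ℝ} (hA : A.PosDef) :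
    (A.map (RCLike.ofReal : ℝ → 𝕜)).PosDef := by
  classical
  have hdet : algebraMap ℝ 𝕜 A.det = (A.map (RCLike.ofReal : ℝ → 𝕜)).det := by
    rw [RingHom.map_det, RingHom.mapMatrix_apply, RCLike.algebraMap_eq_ofReal]
  rw [hA.posSemidef.map_ofReal.posDef_iff_det_ne_zero, ← hdet, RCLike.algebraMap_eq_ofReal]
  exact RCLike.ofReal_ne_zero.mpr hA.det_pos.ne'

theorem PosDef.isUnit_sub_I_smul [DecidableEq n] {A B : Matrix n n ℂ} (hA : A.PosDef)
    (hB : B.IsHermitian) : IsUnit (A - Complex.I • B) := by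
  rw [isUnit_iff_isUnit_det, isUnit_iff_ne_zero]
  intro hdet
  obtain ⟨v, hv, hker⟩ := exists_mulVec_eq_zero_iff.mpr hdet
  rw [sub_mulVec, smul_mulVec, sub_eq_zero] at hker
  have hApos := hA.re_dotProduct_pos hv
  rw [hker, dotProduct_smul, smul_eq_mul] at hApos
  simp [hB.im_star_dotProduct_mulVec_self] at hApos

end Matrix

section

variable {R : Type*} [Ring R]

theorem smul_add_smul_mul_mul_smul_add_smul {𝕜 : Type*} [CommRing 𝕜] [Algebra 𝕜 R]
    {S T X : R} (hSX : S * X = 1) (hXS : X * S = 1) (a₁ a₂ b₁ b₂ : 𝕜) :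
    (a₁ • S + a₂ • T) * X * (b₁ • S + b₂ • T) =
      (a₁ * b₁) • S + (a₁ * b₂ + a₂ * b₁) • T + (a₂ * b₂) • (T * X * T) := by
  simp only [add_mul, mul_add, smul_mul_assoc, mul_smul_comm, mul_assoc, hXS, hSX, mul_one,
    one_mul]
  module

theorem ttscsp_factor_identity [Algebra ℂ R] {W T X : R}
    (hl : (W - Complex.I • T) * X = 1) (hr : X * (W - Complex.I • T) = 1) (α β : ℂ) :
    (α • W + T) * X * (W + β • T) - (T - β • W) * X * (W - α • T) =
      (α + β) • (W + Complex.I • T) := by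
  obtain ⟨S, rfl⟩ : ∃ S, W = S + Complex.I • T := ⟨W - Complex.I • T, by abel⟩
  rw [add_sub_cancel_right] at hl hr
  have e₁ : α • (S + Complex.I • T) + T = α • S + (1 + Complex.I * α) • T := by module
  have e₂ : S + Complex.I • T + β • T = (1 : ℂ) • S + (β + Complex.I) • T := by module
  have e₃ : T - β • (S + Complex.I • T) = (-β) • S + (1 - Complex.I * β) • T := by module
  have e₄ : S + Complex.I • T - α • T = (1 : ℂ) • S + (Complex.I - α) • T := by module
  rw [e₁, e₂, e₃, e₄, smul_add_smul_mul_mul_smul_add_smul hl hr,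
    smul_add_smul_mul_mul_smul_add_smul hl hr]
  match_scalars
  · ring
  · ring
  · linear_combination (α + β) * Complex.I_sq

end

/-- **The TTSCSP splitting.** With
`M = (1/(α+β))·(αW + T)(W - iT)⁻¹(W + βT)` and
`N = (1/(α+β))·(T - βW)(W - iT)⁻¹(W - αT)`,
one has `M - N = W + iT`, i.e. `(M, N)` is a splitting of `A = W + iT`. -/
theorem ttscsp_splitting
    {n : ℕ}
    (W T : Matrix (Fin n) (Fin n) ℝ)
    (hW : W.PosDef) (hT : T.PosSemidef)
    (α β : ℝ) (hα : 0 < α) (hβ : 0 < β)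
    (Wc Tc M N : Matrix (Fin n) (Fin n) ℂ)
    (hWc : Wc = W.map Complex.ofReal)
    (hTc : Tc = T.map Complex.ofReal)
    (hM : M = (((α : ℂ) + β)⁻¹) • (((α : ℂ) • Wc + Tc) * (Wc - Complex.I • Tc)⁻¹ * (Wc + (β : ℂ) • Tc)))
    (hN : N = (((α : ℂ) + β)⁻¹) • ((Tc - (β : ℂ) • Wc) * (Wc - Complex.I • Tc)⁻¹ * (Wc - (α : ℂ) • Tc))) :
    M - N = Wc + Complex.I • Tc := by
  have hWc_posDef : Wc.PosDef := hWc ▸ hW.map_ofReal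
  have hTc_herm : Tc.IsHermitian := hTc ▸ hT.map_ofReal.isHermitian
  have hdet : IsUnit (Wc - Complex.I • Tc).det :=
    (isUnit_iff_isUnit_det _).mp (hWc_posDef.isUnit_sub_I_smul hTc_herm)
  have hαβ : (α : ℂ) + β ≠ 0 := by exact_mod_cast (add_pos hα hβ).ne'
  rw [hM, hN, ← smul_sub, ttscsp_factor_identity (mul_nonsing_inv _ hdet)
    (nonsing_inv_mul _ hdet), inv_smul_smul₀ hαβ]
end
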